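/- arXiv:2405.09491 — 3 statements merged into one kernel-verified Lean document; each statement's English description precedes it below -/
import Mathlib

section
/- For every n ≥ 1, the subalgebra of D_{2n}-invariant polynomials in ℂ[x,y] is generated by xy and x^n + y^n; that is, a polynomial f ∈ ℂ[x,y] is fixed by both automorphisms σ and τ if and only if f lies in the ℂ-subalgebra generated by xy and x^n + y^n, so ℂ[x,y]^{D_{2n}} = ℂ[xy, x^n + y^n]. -/
open MvPolynomial

/-!
The automorphism `σ` multiplies the coefficient of `xᵃyᵇ` by `εᵃ⁻ᵇ`, so a `σ`-invariant polynomial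
only involves monomials with `a ≡ b [MOD n]`. Symmetrizing with `τ`, `2f = f + τf` is a combination
of the binomials `xᵃyᵇ + xᵇyᵃ = (xy)ᵇ (xⁿᵏ + yⁿᵏ)` (for `a = b + nk`), and the power sums
`xⁿᵏ + yⁿᵏ` lie in `ℂ[xy, xⁿ + yⁿ]` by Newton's recurrence. Conversely, `σ` and `τ` fix both
generators.
-/

/-- The algebra automorphism `σ : x ↦ εx, y ↦ ε⁻¹y` of `ℂ[x,y]`. -/
noncomputable def sigmaA (ε : ℂ) : MvPolynomial (Fin 2) ℂ →ₐ[ℂ] MvPolynomial (Fin 2) ℂ :=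
  aeval ![C ε * X 0, C ε⁻¹ * X 1]

/-- The algebra automorphism `τ : x ↦ y, y ↦ x` of `ℂ[x,y]`. -/
noncomputable def tauA : MvPolynomial (Fin 2) ℂ →ₐ[ℂ] MvPolynomial (Fin 2) ℂ :=
  aeval ![X 1, X 0]

theorem MvPolynomial.coeff_aeval_C_mul_X {σ R : Type*} [CommSemiring R] (w : σ → R)
    (p : MvPolynomial σ R) (d : σ →₀ ℕ) :
    coeff d (aeval (fun i => C (w i) * X i) p) = (d.prod fun i k => w i ^ k) * coeff d p := by
  classical
  induction p using MvPolynomial.induction_on' with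
  | monomial s c =>
    have hmonomial : aeval (fun i => C (w i) * X i) (monomial s c) =
        monomial s ((s.prod fun i k => w i ^ k) * c) := by
      rw [aeval_monomial, monomial_eq, C_mul, map_finsuppProd C]
      simp only [mul_pow, Finsupp.prod_mul, algebraMap_eq, ← C_pow]
      ring
    rw [hmonomial, coeff_monomial, coeff_monomial]
    split_ifs with h
    · rw [h]
    · rw [mul_zero]
  | add p q hp hq => rw [map_add, coeff_add, coeff_add, hp, hq, mul_add]

section PowerSums

variable {R A : Type*} [CommRing R] [CommRing A] [Algebra R A] (x y : A)

theorem pow_mul_add_pow_mul_mem_adjoin (n k : ℕ) :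
    x ^ (n * k) + y ^ (n * k) ∈ Algebra.adjoin R {x * y, x ^ n + y ^ n} := by
  have hxy : x * y ∈ Algebra.adjoin R {x * y, x ^ n + y ^ n} := Algebra.subset_adjoin (by simp)
  have hsum : x ^ n + y ^ n ∈ Algebra.adjoin R {x * y, x ^ n + y ^ n} :=
    Algebra.subset_adjoin (by simp)
  induction k using Nat.twoStepInduction with
  | zero => simpa using add_mem (one_mem _) (one_mem _)
  | one => simpa using hsum
  | more k hk hk1 =>
    have recurrence : x ^ (n * (k + 2)) + y ^ (n * (k + 2)) =
        (x ^ n + y ^ n) * (x ^ (n * (k + 1)) + y ^ (n * (k + 1))) -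
          (x * y) ^ n * (x ^ (n * k) + y ^ (n * k)) := by ring
    rw [recurrence]
    exact sub_mem (mul_mem hsum hk1) (mul_mem (pow_mem hxy n) hk)

theorem pow_mul_pow_add_pow_mul_pow_mem_adjoin {n a b : ℕ} (h : a ≡ b [MOD n]) :
    x ^ a * y ^ b + x ^ b * y ^ a ∈ Algebra.adjoin R {x * y, x ^ n + y ^ n} := by
  wlog hab : b ≤ a generalizing a b
  · simpa only [add_comm] using this h.symm (le_of_not_ge hab)
  obtain ⟨k, rfl⟩ : ∃ k, a = b + n * k :=
    ⟨(a - b) / n, by rw [Nat.mul_div_cancel' ((Nat.modEq_iff_dvd' hab).mp h.symm)]; omega⟩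
  have factor : x ^ (b + n * k) * y ^ b + x ^ b * y ^ (b + n * k) =
      (x * y) ^ b * (x ^ (n * k) + y ^ (n * k)) := by ring
  rw [factor]
  exact mul_mem (pow_mem (Algebra.subset_adjoin (by simp)) b)
    (pow_mul_add_pow_mul_mem_adjoin x y n k)

end PowerSums

theorem AlgHom.apply_eq_self_of_mem_adjoin_pair {R A : Type*} [CommSemiring R] [Semiring A]
    [Algebra R A] {φ : A →ₐ[R] A} {a b x : A} (ha : φ a = a) (hb : φ b = b)
    (hx : x ∈ Algebra.adjoin R {a, b}) : φ x = x :=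
  (AlgHom.eqOn_adjoin_iff (ψ := AlgHom.id R A)).mpr (by rintro _ (rfl | rfl) <;> assumption) hx

theorem sigmaA_eq_aeval_C_mul_X (ε : ℂ) : sigmaA ε = aeval fun i => C (![ε, ε⁻¹] i) * X i := by
  rw [sigmaA]
  congr 1
  ext i
  fin_cases i <;> rfl

theorem sigmaA_X_mul_X {ε : ℂ} (hε : ε ≠ 0) : sigmaA ε (X 0 * X 1) = X 0 * X 1 := by
  simp only [sigmaA, map_mul, aeval_X, Matrix.cons_val_zero, Matrix.cons_val_one]
  rw [mul_mul_mul_comm, ← C_mul, mul_inv_cancel₀ hε, C_1, one_mul]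

theorem sigmaA_X_pow_add_X_pow {ε : ℂ} {n : ℕ} (hε : ε ^ n = 1) :
    sigmaA ε (X 0 ^ n + X 1 ^ n) = X 0 ^ n + X 1 ^ n := by
  simp only [sigmaA, map_add, map_pow, aeval_X, Matrix.cons_val_zero, Matrix.cons_val_one,
    mul_pow, ← C_pow, inv_pow, hε, inv_one, C_1, one_mul]

theorem tauA_X_mul_X : tauA (X 0 * X 1) = X 0 * X 1 := by
  simp only [tauA, map_mul, aeval_X, Matrix.cons_val_zero, Matrix.cons_val_one, mul_comm]

theorem tauA_X_pow_add_X_pow (n : ℕ) : tauA (X 0 ^ n + X 1 ^ n) = X 0 ^ n + X 1 ^ n := by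
  simp only [tauA, map_add, map_pow, aeval_X, Matrix.cons_val_zero, Matrix.cons_val_one, add_comm]

theorem tauA_monomial (d : Fin 2 →₀ ℕ) (c : ℂ) :
    tauA (monomial d c) = C c * X 0 ^ d 1 * X 1 ^ d 0 := by
  simp only [monomial_fin_two, tauA, map_mul, map_pow, aeval_X, aeval_C, algebraMap_eq,
    Matrix.cons_val_zero, Matrix.cons_val_one]
  ring

theorem modEq_of_mem_support_of_sigmaA_eq {n : ℕ} {ε : ℂ} (hε : IsPrimitiveRoot ε n) (hε0 : ε ≠ 0)
    {f : MvPolynomial (Fin 2) ℂ} (hf : sigmaA ε f = f) {d : Fin 2 →₀ ℕ} (hd : d ∈ f.support) :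
    d 0 ≡ d 1 [MOD n] := by
  have hcoeff : ε ^ d 0 * ε⁻¹ ^ d 1 * coeff d f = coeff d f := by
    conv_rhs => rw [← hf]
    rw [sigmaA_eq_aeval_C_mul_X, coeff_aeval_C_mul_X, Finsupp.prod_fintype _ _ fun _ => pow_zero _,
      Fin.prod_univ_two]
    rfl
  have hweight : ε ^ ((d 0 : ℤ) - d 1) = 1 := by
    rw [zpow_sub₀ hε0, zpow_natCast, zpow_natCast, div_eq_mul_inv, ← inv_pow]
    exact (mul_eq_right₀ (mem_support_iff.mp hd)).mp hcoeff
  exact (Nat.modEq_iff_dvd.mpr ((hε.zpow_eq_one_iff_dvd _).mp hweight)).symm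

theorem add_tauA_mem_adjoin {n : ℕ} {f : MvPolynomial (Fin 2) ℂ}
    (hf : ∀ d ∈ f.support, d 0 ≡ d 1 [MOD n]) :
    f + tauA f ∈ Algebra.adjoin ℂ {(X 0 * X 1 : MvPolynomial (Fin 2) ℂ), X 0 ^ n + X 1 ^ n} := by
  rw [f.as_sum, map_sum, ← Finset.sum_add_distrib]
  refine Subalgebra.sum_mem _ fun d hd => ?_
  have factor : monomial d (coeff d f) + tauA (monomial d (coeff d f)) =
      C (coeff d f) * (X 0 ^ d 0 * X 1 ^ d 1 + X 0 ^ d 1 * X 1 ^ d 0) := by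
    rw [tauA_monomial, monomial_fin_two]
    ring
  rw [factor]
  exact mul_mem (Subalgebra.algebraMap_mem _ _)
    (pow_mul_pow_add_pow_mul_pow_mem_adjoin _ _ (hf d hd))

/-- `ℂ[x,y]^{D_{2n}} = ℂ[xy, xⁿ + yⁿ]`. -/
theorem dihedral_invariant_ring (n : ℕ) (hn : 1 ≤ n) (ε : ℂ) (hε : IsPrimitiveRoot ε n)
    (f : MvPolynomial (Fin 2) ℂ) :
    (sigmaA ε f = f ∧ tauA f = f) ↔
      f ∈ Algebra.adjoin ℂ
        {(X 0 * X 1 : MvPolynomial (Fin 2) ℂ), X 0 ^ n + X 1 ^ n} := by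
  have hε0 : ε ≠ 0 := hε.ne_zero (by omega)
  constructor
  · rintro ⟨hσ, hτ⟩
    have h2f := add_tauA_mem_adjoin fun d hd => modEq_of_mem_support_of_sigmaA_eq hε hε0 hσ hd
    rw [hτ, ← two_smul ℂ f] at h2f
    simpa using Subalgebra.smul_mem _ h2f (2⁻¹ : ℂ)
  · intro hf
    exact ⟨AlgHom.apply_eq_self_of_mem_adjoin_pair (sigmaA_X_mul_X hε0)
        (sigmaA_X_pow_add_X_pow hε.pow_eq_one) hf,
      AlgHom.apply_eq_self_of_mem_adjoin_pair tauA_X_mul_X (tauA_X_pow_add_X_pow n) hf⟩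
end

section
/- A nonzero vector v = (x,y) ∈ ℂ² \ {0} has nontrivial stabilizer in D_{2n} if and only if x^n = y^n; moreover, if x^n = y^n and v ≠ 0, then the stabilizer subgroup {g ∈ D_{2n} : g·v = v} has order exactly 2, generated by the unique reflection τσ^k with y = ε^k x. (This gives the boundary divisor B = (1/2)·B̂ of the quotient map ℂ² → ℂ²/D_{2n}, supported on the image of {x^n = y^n}.) -/
open Matrix

private lemma fixD (a b : ℂ) (v : Fin 2 → ℂ) :
    (!![a, 0; 0, b] : Matrix (Fin 2) (Fin 2) ℂ).mulVec v = v ↔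
      (a * v 0 = v 0 ∧ b * v 1 = v 1) := by
  constructor
  · intro h
    constructor
    · have := congrFun h 0
      simpa [Matrix.mulVec, dotProduct, Fin.sum_univ_two] using this
    · have := congrFun h 1
      simpa [Matrix.mulVec, dotProduct, Fin.sum_univ_two] using this
  · rintro ⟨h0, h1⟩
    funext i
    fin_cases i <;> simpa [Matrix.mulVec, dotProduct, Fin.sum_univ_two]

private lemma fixA (a b : ℂ) (v : Fin 2 → ℂ) :
    (!![0, a; b, 0] : Matrix (Fin 2) (Fin 2) ℂ).mulVec v = v ↔
      (a * v 1 = v 0 ∧ b * v 0 = v 1) := by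
  constructor
  · intro h
    constructor
    · have := congrFun h 0
      simpa [Matrix.mulVec, dotProduct, Fin.sum_univ_two] using this
    · have := congrFun h 1
      simpa [Matrix.mulVec, dotProduct, Fin.sum_univ_two] using this
  · rintro ⟨h0, h1⟩
    funext i
    fin_cases i <;> simpa [Matrix.mulVec, dotProduct, Fin.sum_univ_two]

private lemma diag_pow (a b : ℂ) (k : ℕ) :
    (!![a, 0; 0, b] : Matrix (Fin 2) (Fin 2) ℂ) ^ k = !![a ^ k, 0; 0, b ^ k] := by
  induction k with
  | zero => simp [Matrix.one_fin_two]
  | succ k ih => rw [pow_succ, ih, Matrix.mul_fin_two, pow_succ, pow_succ]; ring_nf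

private lemma key_struct (n : ℕ) (hn : 1 ≤ n) (ε : ℂ) (hε : IsPrimitiveRoot ε n)
    (σg τg : GL (Fin 2) ℂ)
    (hσ : (σg : Matrix (Fin 2) (Fin 2) ℂ) = !![ε, 0; 0, ε⁻¹])
    (hτ : (τg : Matrix (Fin 2) (Fin 2) ℂ) = !![0, 1; 1, 0]) :
    ∀ g ∈ Subgroup.closure {σg, τg}, ∃ a : ℂ, a ^ n = 1 ∧
      ((g : Matrix (Fin 2) (Fin 2) ℂ) = !![a, 0; 0, a⁻¹] ∨
       (g : Matrix (Fin 2) (Fin 2) ℂ) = !![0, a; a⁻¹, 0]) := by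
  intro g hg
  induction hg using Subgroup.closure_induction with
  | mem x hx =>
      rcases hx with h | h
      · exact ⟨ε, hε.pow_eq_one, Or.inl (by rw [h, hσ])⟩
      · simp only [Set.mem_singleton_iff] at h
        exact ⟨1, one_pow n, Or.inr (by rw [h, hτ]; norm_num)⟩
  | one => exact ⟨1, one_pow n, Or.inl (by simp [Matrix.one_fin_two])⟩
  | mul x y hx hy ihx ihy =>
      obtain ⟨a, ha, hxa⟩ := ihx
      obtain ⟨b, hb, hyb⟩ := ihy
      have ha0 : a ≠ 0 := fun h => by simp [h, zero_pow (by omega : n ≠ 0)] at ha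
      have hb0 : b ≠ 0 := fun h => by simp [h, zero_pow (by omega : n ≠ 0)] at hb
      have hxy : ((x * y : GL (Fin 2) ℂ) : Matrix (Fin 2) (Fin 2) ℂ)
          = (x : Matrix (Fin 2) (Fin 2) ℂ) * (y : Matrix (Fin 2) (Fin 2) ℂ) := rfl
      rcases hxa with h1 | h1 <;> rcases hyb with h2 | h2
      · exact ⟨a * b, by rw [mul_pow, ha, hb, one_mul],
          Or.inl (by rw [hxy, h1, h2, Matrix.mul_fin_two, mul_inv]; ring_nf)⟩
      · exact ⟨a * b, by rw [mul_pow, ha, hb, one_mul],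
          Or.inr (by rw [hxy, h1, h2, Matrix.mul_fin_two, mul_inv]; ring_nf)⟩
      · refine ⟨a * b⁻¹, ?_, Or.inr ?_⟩
        · rw [mul_pow, ha, inv_pow, hb, inv_one, one_mul]
        · rw [hxy, h1, h2, Matrix.mul_fin_two, mul_inv, inv_inv]; ring_nf
      · refine ⟨a * b⁻¹, ?_, Or.inl ?_⟩
        · rw [mul_pow, ha, inv_pow, hb, inv_one, one_mul]
        · rw [hxy, h1, h2, Matrix.mul_fin_two, mul_inv, inv_inv]; ring_nf
  | inv x hx ihx =>
      obtain ⟨a, ha, hxa⟩ := ihx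
      have ha0 : a ≠ 0 := fun h => by simp [h, zero_pow (by omega : n ≠ 0)] at ha
      have hinv : ∀ M : Matrix (Fin 2) (Fin 2) ℂ,
          (x : Matrix (Fin 2) (Fin 2) ℂ) * M = 1 →
          ((x⁻¹ : GL (Fin 2) ℂ) : Matrix (Fin 2) (Fin 2) ℂ) = M := by
        intro M hM
        calc ((x⁻¹ : GL (Fin 2) ℂ) : Matrix (Fin 2) (Fin 2) ℂ)
            = ((x⁻¹ : GL (Fin 2) ℂ) : Matrix (Fin 2) (Fin 2) ℂ) *
              ((x : Matrix (Fin 2) (Fin 2) ℂ) * M) := by rw [hM, mul_one]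
          _ = (((x⁻¹ * x : GL (Fin 2) ℂ)) : Matrix (Fin 2) (Fin 2) ℂ) * M := by
              rw [Units.val_mul, mul_assoc]
          _ = M := by rw [inv_mul_cancel]; simp
      rcases hxa with h1 | h1
      · refine ⟨a⁻¹, by rw [inv_pow, ha, inv_one], Or.inl ?_⟩
        rw [inv_inv]
        refine hinv _ ?_
        rw [h1, Matrix.mul_fin_two, Matrix.one_fin_two, mul_inv_cancel₀ ha0,
          inv_mul_cancel₀ ha0]
        ring_nf
      · refine ⟨a, ha, Or.inr ?_⟩
        refine hinv _ ?_
        rw [h1, Matrix.mul_fin_two, Matrix.one_fin_two, mul_inv_cancel₀ ha0,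
          inv_mul_cancel₀ ha0]
        ring_nf

/-- a nonzero `v = (x,y) ∈ ℂ²` has nontrivial stabilizer in `D_{2n}` iff
`xⁿ = yⁿ`; in that case the stabilizer has order exactly `2`, generated by the unique
reflection `τσᵏ` with `y = εᵏ x`. -/
theorem dihedral_stabilizer (n : ℕ) (hn : 1 ≤ n) (ε : ℂ) (hε : IsPrimitiveRoot ε n)
    (σg τg : GL (Fin 2) ℂ)
    (hσ : (σg : Matrix (Fin 2) (Fin 2) ℂ) = !![ε, 0; 0, ε⁻¹])
    (hτ : (τg : Matrix (Fin 2) (Fin 2) ℂ) = !![0, 1; 1, 0])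
    (v : Fin 2 → ℂ) (hv : v ≠ 0) :
    ((∃ g ∈ Subgroup.closure {σg, τg}, g ≠ 1 ∧
        (↑g : Matrix (Fin 2) (Fin 2) ℂ).mulVec v = v) ↔ (v 0) ^ n = (v 1) ^ n) ∧
    ((v 0) ^ n = (v 1) ^ n →
      Nat.card {g : GL (Fin 2) ℂ // g ∈ Subgroup.closure {σg, τg} ∧
          (↑g : Matrix (Fin 2) (Fin 2) ℂ).mulVec v = v} = 2 ∧
      ∃! k : Fin n, v 1 = ε ^ (k : ℕ) * v 0 ∧
        ∀ g ∈ Subgroup.closure {σg, τg},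
          ((↑g : Matrix (Fin 2) (Fin 2) ℂ).mulVec v = v ↔
            g = 1 ∨ g = τg * σg ^ (k : ℕ))) := by
  have hn0 : n ≠ 0 := by omega
  have : NeZero n := ⟨hn0⟩
  have hε0 : ε ≠ 0 := fun h => by
    have := hε.pow_eq_one; simp [h, zero_pow hn0] at this
  have key := key_struct n hn ε hε σg τg hσ hτ
  -- g = 1 iff its matrix is 1
  have hgone : ∀ g : GL (Fin 2) ℂ, (g : Matrix (Fin 2) (Fin 2) ℂ) = 1 ↔ g = 1 :=
    fun g => Units.val_eq_one
  have hvne : ¬ (v 0 = 0 ∧ v 1 = 0) := by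
    rintro ⟨h0, h1⟩
    apply hv
    funext i; fin_cases i <;> assumption
  -- matrix of τg * σg^k
  have hτσ : ∀ k : ℕ, ((τg * σg ^ k : GL (Fin 2) ℂ) : Matrix (Fin 2) (Fin 2) ℂ)
      = !![0, (ε ^ k)⁻¹; ε ^ k, 0] := by
    intro k
    have : ((σg ^ k : GL (Fin 2) ℂ) : Matrix (Fin 2) (Fin 2) ℂ)
        = (σg : Matrix (Fin 2) (Fin 2) ℂ) ^ k := Units.val_pow_eq_pow_val σg k
    rw [Units.val_mul, this, hσ, hτ, diag_pow, Matrix.mul_fin_two, inv_pow]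
    ring_nf
  have hτσ_mem : ∀ k : ℕ, τg * σg ^ k ∈ Subgroup.closure {σg, τg} := by
    intro k
    exact Subgroup.mul_mem _
      (Subgroup.subset_closure (by simp))
      (Subgroup.pow_mem _ (Subgroup.subset_closure (by simp)) k)
  have hτσ_ne : ∀ k : ℕ, τg * σg ^ k ≠ 1 := by
    intro k h
    have := (hgone _).mpr h
    rw [hτσ k, Matrix.one_fin_two] at this
    have h00 := congrFun (congrFun this 0) 0
    simp at h00
  have hτσ_fix : ∀ k : ℕ, v 1 = ε ^ k * v 0 →
      ((τg * σg ^ k : GL (Fin 2) ℂ) : Matrix (Fin 2) (Fin 2) ℂ).mulVec v = v := by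
    intro k hk
    have hεk0 : ε ^ k ≠ 0 := pow_ne_zero k hε0
    rw [hτσ k, fixA]
    constructor
    · rw [hk]; field_simp
    · rw [hk]
  constructor
  · constructor
    · rintro ⟨g, hg, hne, hfix⟩
      obtain ⟨a, ha, hD | hA⟩ := key g hg
      · -- diagonal case: forces a = 1, contradiction
        rw [hD, fixD] at hfix
        obtain ⟨h0, h1⟩ := hfix
        have ha1 : a ≠ 1 := by
          intro h
          apply hne
          rw [← hgone g, hD, h, inv_one, Matrix.one_fin_two]
        exfalso
        apply hvne
        constructor
        · have : (a - 1) * v 0 = 0 := by linear_combination h0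
          rcases mul_eq_zero.mp this with h | h
          · exact absurd (by linear_combination h) ha1
          · exact h
        · have hainv : a⁻¹ ≠ 1 := fun h => ha1 (by rw [← inv_inv a, h, inv_one])
          have : (a⁻¹ - 1) * v 1 = 0 := by linear_combination h1
          rcases mul_eq_zero.mp this with h | h
          · exact absurd (by linear_combination h) hainv
          · exact h
      · rw [hA, fixA] at hfix
        obtain ⟨h0, h1⟩ := hfix
        have : v 0 = a * v 1 := h0.symm
        rw [this, mul_pow, ha, one_mul]
    · intro h
      have hx0 : v 0 ≠ 0 := by
        intro hx
        apply hvne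
        refine ⟨hx, ?_⟩
        rw [hx, zero_pow hn0] at h
        exact pow_eq_zero_iff hn0 |>.mp h.symm
      have hroot : (v 1 / v 0) ^ n = 1 := by
        rw [div_pow, ← h, div_self (pow_ne_zero n hx0)]
      obtain ⟨k, hk, hke⟩ := hε.eq_pow_of_pow_eq_one hroot
      have hky : v 1 = ε ^ k * v 0 := by
        rw [hke]; field_simp
      exact ⟨τg * σg ^ k, hτσ_mem k, hτσ_ne k, hτσ_fix k hky⟩
  · intro h
    have hx0 : v 0 ≠ 0 := by
      intro hx
      apply hvne
      refine ⟨hx, ?_⟩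
      rw [hx, zero_pow hn0] at h
      exact pow_eq_zero_iff hn0 |>.mp h.symm
    have hroot : (v 1 / v 0) ^ n = 1 := by
      rw [div_pow, ← h, div_self (pow_ne_zero n hx0)]
    obtain ⟨k, hk, hke⟩ := hε.eq_pow_of_pow_eq_one hroot
    have hky : v 1 = ε ^ k * v 0 := by
      rw [hke]; field_simp
    have hεk0 : ε ^ k ≠ 0 := pow_ne_zero k hε0
    -- the main classification of stabilizing elements
    have hclass : ∀ g ∈ Subgroup.closure {σg, τg},
        ((↑g : Matrix (Fin 2) (Fin 2) ℂ).mulVec v = v ↔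
          g = 1 ∨ g = τg * σg ^ k) := by
      intro g hg
      constructor
      · intro hfix
        obtain ⟨a, ha, hD | hA⟩ := key g hg
        · left
          rw [hD, fixD] at hfix
          obtain ⟨h0, h1⟩ := hfix
          have ha1 : a = 1 := by
            have : (a - 1) * v 0 = 0 := by linear_combination h0
            rcases mul_eq_zero.mp this with hh | hh
            · linear_combination hh
            · exact absurd hh hx0
          rw [← hgone g, hD, ha1, inv_one, Matrix.one_fin_two]
        · right
          rw [hA, fixA] at hfix
          obtain ⟨h0, h1⟩ := hfix
          -- a * v 1 = v 0, v 1 = ε^k * v 0 ⇒ a = (ε^k)⁻¹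
          have haval : a = (ε ^ k)⁻¹ := by
            have h2 : a * (ε ^ k) * v 0 = v 0 := by
              rw [mul_assoc, ← hky]; linear_combination h0
            have h3 : (a * ε ^ k - 1) * v 0 = 0 := by linear_combination h2
            rcases mul_eq_zero.mp h3 with hh | hh
            · field_simp
              linear_combination hh
            · exact absurd hh hx0
          apply Units.ext
          show (g : Matrix (Fin 2) (Fin 2) ℂ) = _
          rw [hA, hτσ k, haval, inv_inv]
      · rintro (rfl | rfl)
        · show (((1 : GL (Fin 2) ℂ)) : Matrix (Fin 2) (Fin 2) ℂ).mulVec v = v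
          simp
        · exact hτσ_fix k hky
    constructor
    · rw [Nat.card_eq_two_iff]
      refine ⟨⟨1, Subgroup.one_mem _, by simp⟩,
        ⟨τg * σg ^ k, hτσ_mem k, hτσ_fix k hky⟩, ?_, ?_⟩
      · intro hcontra
        exact hτσ_ne k (congrArg Subtype.val hcontra).symm
      · ext ⟨g, hg, hfix⟩
        simp only [Set.mem_univ, iff_true]
        rcases (hclass g hg).mp hfix with rfl | rfl
        · exact Set.mem_insert _ _
        · exact Set.mem_insert_iff.mpr (Or.inr rfl)
    · refine ⟨⟨k, hk⟩, ⟨hky, hclass⟩, ?_⟩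
      rintro ⟨k', hk'⟩ ⟨hky', -⟩
      have : ε ^ k' = ε ^ k := by
        have := hky'.symm.trans hky
        exact mul_right_cancel₀ hx0 this
      exact Fin.ext (hε.pow_inj hk' hk this)
end

section
/- For every 1 ≤ i ≤ n−1 and (a,b) ∈ ℂ² with (a,b) ≠ (0,0), the automorphism σ: x ↦ εx, y ↦ ε⁻¹y (ε a primitive n-th root of unity) descends to a ℂ-linear automorphism of the quotient ℂ[x,y]/I_i(a,b), and for each integer k with 0 ≤ k ≤ n−1 the eigenspace of this automorphism with eigenvalue ε^k is one-dimensional. (Hence H⁰(O_Z) is isomorphic to the regular representation ℂ[ℤ_n], so each I_i(a,b) is a ℤ_n-cluster.) -/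
open MvPolynomial

/-- The Ito–Nakamura ideal `I_i(a,b) = ⟨a·xⁱ − b·y^{n−i}, x^{i+1}, xy, y^{n+1−i}⟩`. -/
noncomputable def itoNak (n i : ℕ) (a b : ℂ) : Ideal (MvPolynomial (Fin 2) ℂ) :=
  Ideal.span
    {C a * X 0 ^ i - C b * X 1 ^ (n - i), X 0 ^ (i + 1), X 0 * X 1, X 1 ^ (n + 1 - i)}

/-!
`σ` sends each generator of `I = I_i(a,b)` to a scalar multiple of itself (for `a·xⁱ − b·y^{n−i}`
because `ε⁻¹^{n−i} = εⁱ`), so it descends to an automorphism of `ℂ[x,y]/I`.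

Suppose `b ≠ 0`. The classes of `1, x, …, xⁱ, y^{n−i−1}, …, y` span the quotient, since
`y^{n−i} ≡ (a/b)·xⁱ` and every other monomial lies in `I`. They are `σ`-eigenvectors for the
pairwise distinct eigenvalues `1, ε, …, ε^{n−1}`, and none of them lies in `I`: the ideal `I` is
contained in `axisIdeal`, defined by conditions on the restrictions of a polynomial to the two
coordinate axes, and these monomials are not in `axisIdeal`. If eigenvectors with distinct
eigenvalues span a space, every one of those eigenspaces is a line.

The case `b = 0` reduces to the previous one, since `I_i(a,0) = I_{i−1}(0,1)`.
-/

theorem Module.End.eigenspace_eq_span_singleton_of_span_eigenvectors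
    {K V ι : Type*} [Field K] [AddCommGroup V] [Module K V] [Fintype ι]
    {f : Module.End K V} {μ : ι → K} (hμ : Function.Injective μ) {v : ι → V}
    (hv : ∀ k, f.HasEigenvector (μ k) (v k)) (hspan : ⊤ ≤ Submodule.span K (Set.range v))
    (k : ι) : f.eigenspace (μ k) = K ∙ v k := by
  refine le_antisymm (fun x hx => ?_) ((Submodule.span_singleton_le_iff_mem _ _).2 (hv k).1)
  obtain ⟨c, rfl⟩ :=
    (Submodule.mem_span_range_iff_exists_fun K).1 (hspan (Submodule.mem_top (x := x)))
  have hcomb : ∑ j, (c j * (μ j - μ k)) • v j = 0 := by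
    rw [Module.End.mem_eigenspace_iff, map_sum, Finset.smul_sum, ← sub_eq_zero,
      ← Finset.sum_sub_distrib] at hx
    rw [← hx]
    refine Finset.sum_congr rfl fun j _ => ?_
    rw [map_smul, (hv j).apply_eq_smul, mul_sub, sub_smul, mul_smul, smul_comm (μ k), mul_smul]
  have hc : ∀ j, j ≠ k → c j = 0 := fun j hj =>
    (mul_eq_zero.1 (Fintype.linearIndependent_iff.1
      (Module.End.eigenvectors_linearIndependent' f μ hμ v hv) _ hcomb j)).resolve_right
      (sub_ne_zero.2 (hμ.ne hj))
  rw [Finset.sum_eq_single k (fun j _ hj => by rw [hc j hj, zero_smul]) (by simp)]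
  exact Submodule.smul_mem _ _ (Submodule.mem_span_singleton_self _)

lemma inv_pow_sub_eq_pow {G : Type*} [DivisionMonoid G] {ε : G} {n k : ℕ} (hε : ε ^ n = 1)
    (hk : k ≤ n) : ε⁻¹ ^ (n - k) = ε ^ k := by
  rw [inv_pow, inv_eq_iff_eq_inv]
  exact eq_inv_of_mul_eq_one_left (by rw [← pow_add, Nat.sub_add_cancel hk, hε])

lemma Polynomial.coeff_mul_of_X_pow_dvd {R : Type*} [CommSemiring R] {p q : Polynomial R}
    {m : ℕ} (hq : Polynomial.X ^ m ∣ q) : (p * q).coeff m = p.coeff 0 * q.coeff m := by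
  obtain ⟨r, rfl⟩ := hq
  rw [mul_left_comm, coeff_X_pow_mul', coeff_X_pow_mul', if_pos le_rfl, if_pos le_rfl,
    Nat.sub_self, mul_coeff_zero]

lemma MvPolynomial.coeff_zero_aeval {σ R : Type*} [CommSemiring R] {v : σ → Polynomial R}
    (hv : ∀ j, (v j).coeff 0 = 0) (p : MvPolynomial σ R) :
    (aeval v p).coeff 0 = constantCoeff p := by
  induction p using MvPolynomial.induction_on with
  | C c => simp
  | add p q hp hq => simp [hp, hq]
  | mul_X p j hp => simp [Polynomial.mul_coeff_zero, hv]

lemma Ideal.Quotient.mk_C_mul {R σ : Type*} [CommRing R] (I : Ideal (MvPolynomial σ R)) (c : R)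
    (p : MvPolynomial σ R) : Ideal.Quotient.mk I (C c * p) = c • Ideal.Quotient.mk I p := by
  rw [C_mul', ← Ideal.Quotient.mkₐ_eq_mk R, map_smul]

lemma sigmaA_X_zero_pow (ε : ℂ) (p : ℕ) : sigmaA ε (X 0 ^ p) = C (ε ^ p) * X 0 ^ p := by
  simp [sigmaA, mul_pow]

lemma sigmaA_X_one_pow (ε : ℂ) (q : ℕ) : sigmaA ε (X 1 ^ q) = C (ε⁻¹ ^ q) * X 1 ^ q := by
  simp [sigmaA, mul_pow, ← C_pow]

lemma sigmaA_comp (ε δ : ℂ) : (sigmaA ε).comp (sigmaA δ) = sigmaA (ε * δ) := by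
  refine MvPolynomial.algHom_ext fun j => ?_
  fin_cases j <;> simp [sigmaA] <;> ring

lemma sigmaA_one : sigmaA 1 = AlgHom.id ℂ (MvPolynomial (Fin 2) ℂ) := by
  refine MvPolynomial.algHom_ext fun j => ?_
  fin_cases j <;> simp [sigmaA]

noncomputable def sigmaEquiv {ε : ℂ} (hε0 : ε ≠ 0) :
    MvPolynomial (Fin 2) ℂ ≃ₐ[ℂ] MvPolynomial (Fin 2) ℂ :=
  AlgEquiv.ofAlgHom (sigmaA ε) (sigmaA ε⁻¹)
    (by rw [sigmaA_comp, mul_inv_cancel₀ hε0, sigmaA_one])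
    (by rw [sigmaA_comp, inv_mul_cancel₀ hε0, sigmaA_one])

noncomputable def restrictX : MvPolynomial (Fin 2) ℂ →ₐ[ℂ] Polynomial ℂ :=
  aeval ![Polynomial.X, 0]

noncomputable def restrictY : MvPolynomial (Fin 2) ℂ →ₐ[ℂ] Polynomial ℂ :=
  aeval ![0, Polynomial.X]

lemma coeff_zero_restrictX (p : MvPolynomial (Fin 2) ℂ) :
    (restrictX p).coeff 0 = constantCoeff p :=
  coeff_zero_aeval (by simp [Fin.forall_fin_two]) p

lemma coeff_zero_restrictY (p : MvPolynomial (Fin 2) ℂ) :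
    (restrictY p).coeff 0 = constantCoeff p :=
  coeff_zero_aeval (by simp [Fin.forall_fin_two]) p

/-- Multiplying `p` by `g` multiplies both coefficients in the last condition by `g(0,0)`, thanks
to the first two conditions. -/
noncomputable def axisIdeal (n i : ℕ) (a b : ℂ) : Ideal (MvPolynomial (Fin 2) ℂ) where
  carrier := {p | Polynomial.X ^ i ∣ restrictX p ∧ Polynomial.X ^ (n - i) ∣ restrictY p ∧
    b * (restrictX p).coeff i + a * (restrictY p).coeff (n - i) = 0}
  add_mem' := by
    rintro p q ⟨hpx, hpy, hp⟩ ⟨hqx, hqy, hq⟩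
    refine ⟨by simpa using dvd_add hpx hqx, by simpa using dvd_add hpy hqy, ?_⟩
    simp only [map_add, Polynomial.coeff_add]
    linear_combination hp + hq
  zero_mem' := by simp
  smul_mem' := by
    rintro g p ⟨hx, hy, h⟩
    refine ⟨by simpa using dvd_mul_of_dvd_right hx _, by simpa using dvd_mul_of_dvd_right hy _,
      ?_⟩
    simp only [smul_eq_mul, map_mul, Polynomial.coeff_mul_of_X_pow_dvd hx,
      Polynomial.coeff_mul_of_X_pow_dvd hy, coeff_zero_restrictX, coeff_zero_restrictY]
    linear_combination constantCoeff g * h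

noncomputable def eigenMonomial (n i k : ℕ) : MvPolynomial (Fin 2) ℂ :=
  if k ≤ i then X 0 ^ k else X 1 ^ (n - k)

section itoNak

variable {n i : ℕ} {a b : ℂ}

lemma sub_mem_itoNak : C a * X 0 ^ i - C b * X 1 ^ (n - i) ∈ itoNak n i a b :=
  Ideal.subset_span (by simp)

lemma X_zero_pow_mem_itoNak : X 0 ^ (i + 1) ∈ itoNak n i a b :=
  Ideal.subset_span (by simp)

lemma X_zero_mul_X_one_mem_itoNak : X 0 * X 1 ∈ itoNak n i a b :=
  Ideal.subset_span (by simp)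

lemma X_one_pow_mem_itoNak : X 1 ^ (n + 1 - i) ∈ itoNak n i a b :=
  Ideal.subset_span (by simp)

lemma itoNak_le_comap_sigmaA {ε : ℂ} (hε : ε ^ n = 1) (hi : i ≤ n) :
    itoNak n i a b ≤ (itoNak n i a b).comap (sigmaA ε) := by
  have h_of_eq : ∀ g c, g ∈ itoNak n i a b → sigmaA ε g = C c * g →
      g ∈ (itoNak n i a b).comap (sigmaA ε) := fun g c hg hσ => by
    rw [Ideal.mem_comap, hσ]; exact Ideal.mul_mem_left _ _ hg
  rw [itoNak, Ideal.span_le]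
  simp only [Set.insert_subset_iff, Set.singleton_subset_iff, SetLike.mem_coe]
  refine ⟨h_of_eq _ (ε ^ i) sub_mem_itoNak ?_, h_of_eq _ _ X_zero_pow_mem_itoNak
    (sigmaA_X_zero_pow ε _), h_of_eq _ (ε * ε⁻¹) X_zero_mul_X_one_mem_itoNak ?_,
    h_of_eq _ _ X_one_pow_mem_itoNak (sigmaA_X_one_pow ε _)⟩
  · rw [map_sub, map_mul, map_mul, sigmaA_X_zero_pow, sigmaA_X_one_pow,
      inv_pow_sub_eq_pow hε hi, algHom_C, algHom_C, algebraMap_eq, mul_sub, map_pow]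
    ring
  · simp [sigmaA]
    ring

noncomputable def sigmaBar {ε : ℂ} (hε : ε ^ n = 1) (hε0 : ε ≠ 0) (hi : i ≤ n) :
    (MvPolynomial (Fin 2) ℂ ⧸ itoNak n i a b) ≃ₐ[ℂ] MvPolynomial (Fin 2) ℂ ⧸ itoNak n i a b :=
  Ideal.quotientEquivAlg _ _ (sigmaEquiv hε0) <| by
    refine (le_antisymm (Ideal.map_le_iff_le_comap.2 (itoNak_le_comap_sigmaA hε hi))
      fun p hp => ?_).symm
    have h := Ideal.mem_map_of_mem (sigmaEquiv hε0) (x := sigmaA ε⁻¹ p)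
      (Ideal.mem_comap.1 (itoNak_le_comap_sigmaA (by rw [inv_pow, hε, inv_one]) hi hp))
    rwa [show sigmaEquiv hε0 (sigmaA ε⁻¹ p) = p from (sigmaEquiv hε0).apply_symm_apply p] at h

lemma sigmaBar_mk {ε : ℂ} (hε : ε ^ n = 1) (hε0 : ε ≠ 0) (hi : i ≤ n)
    (p : MvPolynomial (Fin 2) ℂ) :
    sigmaBar hε hε0 hi (Ideal.Quotient.mk (itoNak n i a b) p) =
      Ideal.Quotient.mk (itoNak n i a b) (sigmaA ε p) :=
  Ideal.quotientEquivAlg_mk _ _ _ p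

lemma C_mul_zero_pow_eq_zero (hai : i = 0 → a = 0) : Polynomial.C a * 0 ^ i = 0 := by
  rcases Nat.eq_zero_or_pos i with rfl | hi
  · simp [hai rfl]
  · simp [zero_pow hi.ne']

lemma itoNak_le_axisIdeal (hi : i < n) (hai : i = 0 → a = 0) :
    itoNak n i a b ≤ axisIdeal n i a b := by
  have hni : n - i ≠ 0 := by omega
  have hni' : n + 1 - i ≠ 0 := by omega
  rw [itoNak, Ideal.span_le]
  simp only [Set.insert_subset_iff, Set.singleton_subset_iff, SetLike.mem_coe, axisIdeal,
    Submodule.mem_mk, AddSubmonoid.mem_mk, AddSubsemigroup.mem_mk, Set.mem_ofPred_eq]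
  simp [restrictX, restrictY, zero_pow hni, zero_pow hni', C_mul_zero_pow_eq_zero hai,
    show n - i ≠ n + 1 - i by omega]
  exact ⟨by ring, pow_dvd_pow _ i.le_succ, pow_dvd_pow _ (by omega)⟩

lemma sigmaA_eigenMonomial {ε : ℂ} (hε : ε ^ n = 1) {k : ℕ} (hk : k ≤ n) :
    sigmaA ε (eigenMonomial n i k) = C (ε ^ k) * eigenMonomial n i k := by
  unfold eigenMonomial
  split_ifs
  · exact sigmaA_X_zero_pow ε k
  · rw [sigmaA_X_one_pow, inv_pow_sub_eq_pow hε hk]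

lemma eigenMonomial_notMem_itoNak (hb : b ≠ 0) (hi : i < n) (hai : i = 0 → a = 0) {k : ℕ}
    (hk : k < n) : eigenMonomial n i k ∉ itoNak n i a b := by
  intro hmem
  obtain ⟨hx, hy, h⟩ := itoNak_le_axisIdeal hi hai hmem
  unfold eigenMonomial at hx hy h
  split_ifs at hx hy h with hki
  · rcases hki.lt_or_eq with hki | rfl
    · simpa [restrictX] using Polynomial.X_pow_dvd_iff.1 hx k hki
    · have : a * (0 ^ k : Polynomial ℂ).coeff (n - k) = 0 := by
        simpa using congrArg (Polynomial.coeff · (n - k)) (C_mul_zero_pow_eq_zero hai)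
      simp [restrictX, restrictY, this, hb] at h
  · simpa [restrictY] using Polynomial.X_pow_dvd_iff.1 hy (n - k) (by omega)

lemma X_one_pow_eq_of_ne_zero (hb : b ≠ 0) :
    (X 1 ^ (n - i) : MvPolynomial (Fin 2) ℂ) =
      C (a / b) * X 0 ^ i - C b⁻¹ * (C a * X 0 ^ i - C b * X 1 ^ (n - i)) := by
  have h : C b⁻¹ * C b = (1 : MvPolynomial (Fin 2) ℂ) := by rw [← C_mul, inv_mul_cancel₀ hb, C_1]
  rw [div_eq_mul_inv, C_mul]
  linear_combination (-X 1 ^ (n - i)) * h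

lemma top_le_span_eigenMonomial (hb : b ≠ 0) (hi : i < n) :
    ⊤ ≤ Submodule.span ℂ
      (Set.range fun k : Fin n => Ideal.Quotient.mk (itoNak n i a b) (eigenMonomial n i k)) := by
  set S := Submodule.span ℂ
    (Set.range fun k : Fin n => Ideal.Quotient.mk (itoNak n i a b) (eigenMonomial n i k))
  have h_eigen : ∀ k < n, Ideal.Quotient.mk _ (eigenMonomial n i k) ∈ S :=
    fun k hk => Submodule.subset_span ⟨⟨k, hk⟩, rfl⟩
  have h_ideal : ∀ p ∈ itoNak n i a b, Ideal.Quotient.mk _ p ∈ S := fun p hp => by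
    rw [Ideal.Quotient.eq_zero_iff_mem.2 hp]; exact S.zero_mem
  have h_C_mul : ∀ c p, Ideal.Quotient.mk _ p ∈ S → Ideal.Quotient.mk _ (C c * p) ∈ S :=
    fun c p hp => by rw [Ideal.Quotient.mk_C_mul]; exact S.smul_mem c hp
  have h_monomial : ∀ p q, Ideal.Quotient.mk _ (X 0 ^ p * X 1 ^ q) ∈ S := by
    intro p q
    rcases Nat.eq_zero_or_pos q with rfl | hq
    · rw [pow_zero, mul_one]
      by_cases hp : p ≤ i
      · simpa [eigenMonomial, hp] using h_eigen p (by omega)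
      · exact h_ideal _ (Ideal.mem_of_dvd _ (pow_dvd_pow _ (by omega)) X_zero_pow_mem_itoNak)
    rcases Nat.eq_zero_or_pos p with rfl | hp
    · rw [pow_zero, one_mul]
      rcases lt_trichotomy q (n - i) with hlt | rfl | hgt
      · have : ¬ n - q ≤ i := by omega
        simpa [eigenMonomial, this, Nat.sub_sub_self (show q ≤ n by omega)]
          using h_eigen (n - q) (by omega)
      · rw [X_one_pow_eq_of_ne_zero hb, map_sub]
        refine S.sub_mem (h_C_mul _ _ ?_) (h_ideal _ (Ideal.mul_mem_left _ _ sub_mem_itoNak))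
        simpa [eigenMonomial] using h_eigen i hi
      · exact h_ideal _ (Ideal.mem_of_dvd _ (pow_dvd_pow _ (by omega)) X_one_pow_mem_itoNak)
    · exact h_ideal _ (Ideal.mem_of_dvd _ (mul_dvd_mul (dvd_pow_self _ hp.ne')
        (dvd_pow_self _ hq.ne')) X_zero_mul_X_one_mem_itoNak)
  rintro q -
  obtain ⟨f, rfl⟩ := Ideal.Quotient.mk_surjective q
  induction f using MvPolynomial.induction_on' with
  | monomial d r =>
    rw [monomial_eq, Finsupp.prod_fintype _ _ (by simp), Fin.prod_univ_two]
    exact h_C_mul _ _ (h_monomial _ _)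
  | add p q hp hq => rw [map_add]; exact S.add_mem hp hq

end itoNak

lemma itoNak_succ_zero_right {n j : ℕ} {a : ℂ} (ha : a ≠ 0) :
    itoNak n (j + 1) a 0 = itoNak n j 0 1 := by
  have hx : (X 0 ^ (j + 1) : MvPolynomial (Fin 2) ℂ) ∈ itoNak n j 0 1 := X_zero_pow_mem_itoNak
  have hy : (X 1 ^ (n + 1 - (j + 1)) : MvPolynomial (Fin 2) ℂ) ∈ itoNak n (j + 1) a 0 :=
    X_one_pow_mem_itoNak
  have hrel : (C a * X 0 ^ (j + 1) : MvPolynomial (Fin 2) ℂ) ∈ itoNak n (j + 1) a 0 := by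
    simpa using sub_mem_itoNak (n := n) (i := j + 1) (a := a) (b := 0)
  apply le_antisymm <;> rw [itoNak, Ideal.span_le] <;>
    simp only [Set.insert_subset_iff, Set.singleton_subset_iff, SetLike.mem_coe]
  · refine ⟨by simpa using Ideal.mul_mem_left _ (C a) hx,
      Ideal.mem_of_dvd _ (pow_dvd_pow _ j.succ.le_succ) hx, X_zero_mul_X_one_mem_itoNak, ?_⟩
    simpa using neg_mem (sub_mem_itoNak (n := n) (i := j) (a := 0) (b := 1))
  · refine ⟨by simpa using neg_mem hy, ?_, X_zero_mul_X_one_mem_itoNak,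
      Ideal.mem_of_dvd _ (pow_dvd_pow _ (by omega)) hy⟩
    simpa [← mul_assoc, ← C_mul, ha] using Ideal.mul_mem_left _ (C a⁻¹) hrel

theorem itoNak_regular_representation_of_ne_zero {n i : ℕ} (hi : i < n) {a b : ℂ} (hb : b ≠ 0)
    (hai : i = 0 → a = 0) {ε : ℂ} (hε : IsPrimitiveRoot ε n) :
    ∃ σbar : (MvPolynomial (Fin 2) ℂ ⧸ itoNak n i a b) ≃ₗ[ℂ]
        (MvPolynomial (Fin 2) ℂ ⧸ itoNak n i a b),
      (∀ f : MvPolynomial (Fin 2) ℂ,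
        σbar (Ideal.Quotient.mk (itoNak n i a b) f) =
          Ideal.Quotient.mk (itoNak n i a b) (sigmaA ε f)) ∧
      ∀ k : ℕ, k ≤ n - 1 →
        Module.finrank ℂ (Module.End.eigenspace (σbar.toLinearMap) (ε ^ k)) = 1 := by
  have hε0 : ε ≠ 0 := hε.ne_zero (by omega)
  let σbar := (sigmaBar (a := a) (b := b) hε.pow_eq_one hε0 hi.le).toLinearEquiv
  have hσbar : ∀ f, σbar (Ideal.Quotient.mk (itoNak n i a b) f) =
      Ideal.Quotient.mk (itoNak n i a b) (sigmaA ε f) :=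
    sigmaBar_mk hε.pow_eq_one hε0 hi.le
  have h_eigen : ∀ j : Fin n, Module.End.HasEigenvector σbar.toLinearMap (ε ^ (j : ℕ))
      (Ideal.Quotient.mk _ (eigenMonomial n i j)) := fun j =>
    ⟨Module.End.mem_eigenspace_iff.2 (by
        rw [LinearEquiv.coe_coe, hσbar, sigmaA_eigenMonomial hε.pow_eq_one j.isLt.le,
          Ideal.Quotient.mk_C_mul]),
      fun h => eigenMonomial_notMem_itoNak hb hi hai j.isLt (Ideal.Quotient.eq_zero_iff_mem.1 h)⟩
  refine ⟨σbar, hσbar, fun k hk => ?_⟩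
  rw [show ε ^ k = ε ^ ((⟨k, by omega⟩ : Fin n) : ℕ) from rfl,
    Module.End.eigenspace_eq_span_singleton_of_span_eigenvectors
      (fun j j' h => Fin.ext (hε.pow_inj j.isLt j'.isLt h)) h_eigen
      (top_le_span_eigenMonomial hb hi),
    finrank_span_singleton (h_eigen _).2]

/-- `σ` descends to a `ℂ`-linear automorphism of `ℂ[x,y]/I_i(a,b)` whose
eigenspace for each eigenvalue `εᵏ`, `0 ≤ k ≤ n−1`, is one-dimensional. -/
theorem itoNak_regular_representation (n i : ℕ) (h1 : 1 ≤ i) (h2 : i ≤ n - 1)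
    (a b : ℂ) (hab : ¬(a = 0 ∧ b = 0)) (ε : ℂ) (hε : IsPrimitiveRoot ε n) :
    ∃ σbar : (MvPolynomial (Fin 2) ℂ ⧸ itoNak n i a b) ≃ₗ[ℂ]
        (MvPolynomial (Fin 2) ℂ ⧸ itoNak n i a b),
      (∀ f : MvPolynomial (Fin 2) ℂ,
        σbar (Ideal.Quotient.mk (itoNak n i a b) f) =
          Ideal.Quotient.mk (itoNak n i a b) (sigmaA ε f)) ∧
      ∀ k : ℕ, k ≤ n - 1 →
        Module.finrank ℂ (Module.End.eigenspace (σbar.toLinearMap) (ε ^ k)) = 1 := by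
  by_cases hb : b = 0
  · obtain ⟨j, rfl⟩ : ∃ j, i = j + 1 := ⟨i - 1, by omega⟩
    subst hb
    rw [itoNak_succ_zero_right fun ha => hab ⟨ha, rfl⟩]
    exact itoNak_regular_representation_of_ne_zero (by omega) one_ne_zero (fun _ => rfl) hε
  · exact itoNak_regular_representation_of_ne_zero (by omega) hb (by omega) hε
end
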